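/- arXiv:1001.0203 — 2 statements merged into one kernel-verified Lean document; each statement's English description precedes it below -/
import Mathlib

section
/- Let (α, 𝒜) be a measurable space, let μ be a finite measure on the product α × α, and let μ̂ be the pushforward of μ under the swap map (x, y) ↦ (y, x). Define ν := μ − (μ − μ̂) (difference of measures). Then: (i) ν ≤ μ; (ii) ν is symmetric, i.e., the pushforward of ν under the swap map equals ν; and (iii) ν is the largest such measure: every measure ρ on α × α that is invariant under the swap map and satisfies ρ ≤ μ also satisfies ρ ≤ ν. -/
/-!
For finite measures `μ - (μ - ν)` is the infimum `μ ⊓ ν`: on a Hahn set `s` where `μ ≤ ν` both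
equal `μ`, and off it both equal `ν`. The swap map is a measurable involution, so pushing forward
along it is an order automorphism of measures that exchanges `μ` and `μ̂`; hence it fixes
`μ ⊓ μ̂`, and every swap-invariant `ρ ≤ μ` also satisfies `ρ ≤ μ̂`.
-/

open MeasureTheory Measure

namespace MeasureTheory.Measure

variable {α : Type*} {mα : MeasurableSpace α} {μ ν : Measure α}

lemma sub_sub_cancel_of_le [IsFiniteMeasure μ] (h : ν ≤ μ) : μ - (μ - ν) = ν := by
  have : IsFiniteMeasure ν := isFiniteMeasure_of_le μ h
  ext t ht
  rw [sub_apply ht sub_le, sub_apply ht h, ENNReal.sub_sub_cancel (measure_ne_top μ t) (h t)]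

theorem map_inf_le {β : Type*} [MeasurableSpace β] {f : α → β} (hf : Measurable f) :
    (μ ⊓ ν).map f ≤ μ.map f ⊓ ν.map f :=
  le_inf (map_mono inf_le_left hf) (map_mono inf_le_right hf)

end MeasureTheory.Measure

namespace MeasureTheory.IsHahnDecomposition

variable {α : Type*} {mα : MeasurableSpace α} {μ ν : Measure α} {s : Set α}

lemma inf_eq (hs : IsHahnDecomposition μ ν s) :
    μ ⊓ ν = μ.restrict s + ν.restrict sᶜ := by
  have hmeas := hs.measurableSet
  refine le_antisymm ?_ (le_inf ?_ ?_)
  · rw [← restrict_add_restrict_compl (μ := μ ⊓ ν) hmeas]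
    gcongr
    exacts [inf_le_left, inf_le_right]
  · conv_rhs => rw [← restrict_add_restrict_compl (μ := μ) hmeas]
    exact add_le_add le_rfl hs.ge_on_compl
  · conv_rhs => rw [← restrict_add_restrict_compl (μ := ν) hmeas]
    exact add_le_add hs.le_on le_rfl

lemma sub_sub_eq [IsFiniteMeasure μ] (hs : IsHahnDecomposition μ ν s) :
    μ - (μ - ν) = μ.restrict s + ν.restrict sᶜ := by
  have hmeas := hs.measurableSet
  rw [← restrict_add_restrict_compl (μ := μ - (μ - ν)) hmeas,
    restrict_sub_eq_restrict_sub_restrict hmeas, restrict_sub_eq_restrict_sub_restrict hmeas,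
    restrict_sub_eq_restrict_sub_restrict hmeas.compl,
    restrict_sub_eq_restrict_sub_restrict hmeas.compl,
    sub_eq_zero_of_le hs.le_on, Measure.sub_zero, sub_sub_cancel_of_le hs.ge_on_compl]

end MeasureTheory.IsHahnDecomposition

namespace MeasureTheory.Measure

variable {α : Type*} {mα : MeasurableSpace α} {μ ν : Measure α}

theorem sub_sub_eq_inf [IsFiniteMeasure μ] [IsFiniteMeasure ν] : μ - (μ - ν) = μ ⊓ ν := by
  obtain ⟨s, hs⟩ := exists_isHahnDecomposition μ ν
  rw [hs.sub_sub_eq, hs.inf_eq]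
end MeasureTheory.Measure

namespace MeasurableEquiv

variable {α β : Type*} [MeasurableSpace α] [MeasurableSpace β]

theorem map_inf (e : α ≃ᵐ β) (μ ν : Measure α) :
    (μ ⊓ ν).map e = μ.map e ⊓ ν.map e := by
  refine le_antisymm (map_inf_le e.measurable) ?_
  calc μ.map e ⊓ ν.map e = ((μ.map e ⊓ ν.map e).map e.symm).map e := (map_map_symm e).symm
    _ ≤ ((μ.map e).map e.symm ⊓ (ν.map e).map e.symm).map e :=
        map_mono (map_inf_le e.symm.measurable) e.measurable
    _ = (μ ⊓ ν).map e := by rw [map_symm_map, map_symm_map]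

end MeasurableEquiv

/-- For a finite measure `μ` on `α × α` with swap-image `μ̂`, the measure
`ν := μ − (μ − μ̂)` satisfies `ν ≤ μ`, is symmetric under the swap map, and is the
largest symmetric measure dominated by `μ`. -/
theorem symmetric_part_largest {α : Type*} [MeasurableSpace α]
    (μ : Measure (α × α)) [IsFiniteMeasure μ]
    (μhat : Measure (α × α)) (hμhat : μhat = Measure.map Prod.swap μ)
    (ν : Measure (α × α)) (hν : ν = μ - (μ - μhat)) :
    ν ≤ μ ∧ Measure.map Prod.swap ν = ν ∧
      ∀ ρ : Measure (α × α), Measure.map Prod.swap ρ = ρ → ρ ≤ μ → ρ ≤ ν := by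
  have : IsFiniteMeasure μhat := hμhat ▸ isFiniteMeasure_map μ Prod.swap
  have hswap_μhat : μhat.map Prod.swap = μ := by
    rw [hμhat, map_map measurable_swap measurable_swap, Prod.swap_swap_eq, map_id]
  rw [hν, sub_sub_eq_inf]
  refine ⟨inf_le_left, ?_, fun ρ hρ hρμ ↦ le_inf hρμ ?_⟩
  · calc (μ ⊓ μhat).map Prod.swap = μ.map Prod.swap ⊓ μhat.map Prod.swap :=
          MeasurableEquiv.prodComm.map_inf μ μhat
      _ = μ ⊓ μhat := by rw [← hμhat, hswap_μhat, inf_comm]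
  · rw [hμhat, ← hρ]
    exact map_mono hρμ measurable_swap
end

section
/- Let U be an open subset of ℝ^d, let γ > 0 and α₀ ≥ 0. Let a_{ij} (1 ≤ i,j ≤ d), b_i, d_i (1 ≤ i ≤ d), and c be measurable, locally integrable real-valued functions on U. Assume the ellipticity condition (C1): for Lebesgue-a.e. x ∈ U and all ξ ∈ ℝ^d, Σ_{i,j} ½(a_{ij}(x) + a_{ji}(x)) ξ_i ξ_j ≥ γ·Σ_i ξ_i². Let u be a smooth compactly supported function on U and assume condition (C4): for every nonnegative smooth compactly supported function ψ on U, ∫_U [ (α₀ + c(1+u) + Σ_i (∂u/∂x_i) b_i)·ψ + Σ_i ( (d_i + b_i)/2 + u·d_i + Σ_j (∂u/∂x_j)·a_{ji} )·(∂ψ/∂x_i) ] dx ≥ 0. Define, for smooth compactly supported f, g on U, 𝓔(f,g) := Σ_{i,j} ∫_U (∂f/∂x_i)(∂g/∂x_j) a_{ij} dx + Σ_i ∫_U f·(∂g/∂x_i)·d_i dx + Σ_i ∫_U (∂f/∂x_i)·g·b_i dx + ∫_U f·g·c dx. Then for every smooth compactly supported f on U, 𝓔(f,f) + 𝓔(u,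 f²) ≥ −α₀·∫_U f² dx. -/
open MeasureTheory Real

/-- Partial derivative in the `i`-th coordinate direction of `f : (Fin d → ℝ) → ℝ`. -/
noncomputable def partialDeriv' (d : ℕ) (f : (Fin d → ℝ) → ℝ) (i : Fin d)
    (x : Fin d → ℝ) : ℝ :=
  fderiv ℝ f x (Pi.single i 1)

/-- The non-symmetric divergence-form Dirichlet form of Example 3.1:
`𝓔(f,g) = Σ_{i,j}∫ (∂f/∂x_i)(∂g/∂x_j) a_{ij} + Σ_i∫ f (∂g/∂x_i) d_i
  + Σ_i∫ (∂f/∂x_i) g b_i + ∫ f g c`. -/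
noncomputable def dirichletForm (d : ℕ) (U : Set (Fin d → ℝ))
    (a : Fin d → Fin d → (Fin d → ℝ) → ℝ) (b dd : Fin d → (Fin d → ℝ) → ℝ)
    (c : (Fin d → ℝ) → ℝ) (f g : (Fin d → ℝ) → ℝ) : ℝ :=
  (∑ i, ∑ j, ∫ x in U, partialDeriv' d f i x * partialDeriv' d g j x * a i j x) +
    (∑ i, ∫ x in U, f x * partialDeriv' d g i x * dd i x) +
    (∑ i, ∫ x in U, partialDeriv' d f i x * g x * b i x) +
    ∫ x in U, f x * g x * c x

lemma pd_cont {d : ℕ} {f : (Fin d → ℝ) → ℝ} (hf : ContDiff ℝ (⊤ : ℕ∞) f) (i : Fin d) :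
    Continuous (partialDeriv' d f i) :=
  (hf.continuous_fderiv (by simp)).clm_apply continuous_const

lemma pd_supp {d : ℕ} {f : (Fin d → ℝ) → ℝ} (hfs : HasCompactSupport f) (i : Fin d) :
    HasCompactSupport (partialDeriv' d f i) :=
  hfs.fderiv_apply (𝕜 := ℝ) (Pi.single i 1)

lemma pd_tsupp {d : ℕ} {f : (Fin d → ℝ) → ℝ} (i : Fin d) :
    tsupport (partialDeriv' d f i) ⊆ tsupport f := by
  apply closure_minimal _ isClosed_closure
  intro x hx
  have : fderiv ℝ f x ≠ 0 := fun h => hx (by simp [partialDeriv', h])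
  exact support_fderiv_subset ℝ (by exact this)

lemma integ_mul {d : ℕ} {U : Set (Fin d → ℝ)} {g h : (Fin d → ℝ) → ℝ}
    (hg : Continuous g) (hgs : HasCompactSupport g) (hsub : tsupport g ⊆ U)
    (hl : LocallyIntegrableOn h U) :
    IntegrableOn (fun x => g x * h x) U := by
  obtain ⟨C, hC⟩ := hgs.exists_bound_of_continuous hg
  have hK : IntegrableOn h (tsupport g) := hl.integrableOn_compact_subset hsub hgs
  have h1 : IntegrableOn (fun x => g x * h x) (tsupport g) :=
    hK.bdd_mul hg.aestronglyMeasurable (Filter.Eventually.of_forall hC)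
  have hss : Function.support (fun x => g x * h x) ⊆ tsupport g := fun x hx => by
    refine subset_closure ?_
    intro h0
    exact hx (by simp [h0])
  exact ((integrableOn_iff_integrable_of_support_subset hss).mp h1).integrableOn

lemma sym_quad {d : ℕ} (A : Fin d → Fin d → ℝ) (ξ : Fin d → ℝ) :
    ∑ i, ∑ j, (1 / 2 : ℝ) * (A i j + A j i) * ξ i * ξ j = ∑ i, ∑ j, ξ i * ξ j * A i j := by
  have h2 : ∑ i, ∑ j, A j i * ξ i * ξ j = ∑ i, ∑ j, A i j * ξ i * ξ j := by
    rw [Finset.sum_comm]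
    exact Finset.sum_congr rfl fun i _ => Finset.sum_congr rfl fun j _ => by ring
  have h3 : ∀ i j, (1 / 2 : ℝ) * (A i j + A j i) * ξ i * ξ j
      = (A i j * ξ i * ξ j) / 2 + (A j i * ξ i * ξ j) / 2 := fun i j => by ring
  simp only [h3, Finset.sum_add_distrib, ← Finset.sum_div, h2]
  have h4 : ∑ i, ∑ j, A i j * ξ i * ξ j = ∑ i, ∑ j, ξ i * ξ j * A i j :=
    Finset.sum_congr rfl fun i _ => Finset.sum_congr rfl fun j _ => by ring
  rw [h4]; ring

lemma pd_sq {d : ℕ} {f : (Fin d → ℝ) → ℝ} (hf : ContDiff ℝ (⊤ : ℕ∞) f) (i : Fin d)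
    (x : Fin d → ℝ) :
    partialDeriv' d (fun x => f x ^ 2) i x = 2 * f x * partialDeriv' d f i x := by
  have hdf : HasFDerivAt f (fderiv ℝ f x) x := (hf.differentiable (by simp) x).hasFDerivAt
  have h2 : HasFDerivAt (fun y => f y ^ 2)
      (f x • fderiv ℝ f x + f x • fderiv ℝ f x) x := by
    have := hdf.mul hdf
    simpa only [pow_two, Pi.mul_def] using this
  simp only [partialDeriv', h2.fderiv, ContinuousLinearMap.add_apply,
    ContinuousLinearMap.smul_apply, smul_eq_mul]
  ring

/-- Example 3.1: lower semi-boundedness of the generalized Feynman–Kac form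
`Q^u(f,f) = 𝓔(f,f) + 𝓔(u,f²) ≥ −α₀ ∫ f²` under the ellipticity condition (C1)
and the distributional positivity condition (C4). -/
theorem feynman_kac_form_lower_bounded (d : ℕ) (U : Set (Fin d → ℝ)) (hU : IsOpen U)
    (γ α₀ : ℝ) (hγ : 0 < γ) (hα₀ : 0 ≤ α₀)
    (a : Fin d → Fin d → (Fin d → ℝ) → ℝ) (b dd : Fin d → (Fin d → ℝ) → ℝ)
    (c : (Fin d → ℝ) → ℝ)
    (ha_meas : ∀ i j, Measurable (a i j)) (hb_meas : ∀ i, Measurable (b i))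
    (hd_meas : ∀ i, Measurable (dd i)) (hc_meas : Measurable c)
    (ha_loc : ∀ i j, LocallyIntegrableOn (a i j) U)
    (hb_loc : ∀ i, LocallyIntegrableOn (b i) U)
    (hd_loc : ∀ i, LocallyIntegrableOn (dd i) U)
    (hc_loc : LocallyIntegrableOn c U)
    (hC1 : ∀ᵐ x, x ∈ U → ∀ ξ : Fin d → ℝ,
      γ * ∑ i, (ξ i) ^ 2 ≤ ∑ i, ∑ j, (1 / 2) * (a i j x + a j i x) * ξ i * ξ j)
    (u : (Fin d → ℝ) → ℝ) (hu : ContDiff ℝ (⊤ : ℕ∞) u) (hu_supp : HasCompactSupport u)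
    (hu_sub : tsupport u ⊆ U)
    (hC4 : ∀ ψ : (Fin d → ℝ) → ℝ, ContDiff ℝ (⊤ : ℕ∞) ψ → HasCompactSupport ψ →
      tsupport ψ ⊆ U → (∀ x, 0 ≤ ψ x) →
      0 ≤ ∫ x in U,
        ((α₀ + c x * (1 + u x) + ∑ i, partialDeriv' d u i x * b i x) * ψ x
          + ∑ i, ((dd i x + b i x) / 2 + u x * dd i x
              + ∑ j, partialDeriv' d u j x * a j i x) * partialDeriv' d ψ i x)) :
    ∀ f : (Fin d → ℝ) → ℝ, ContDiff ℝ (⊤ : ℕ∞) f → HasCompactSupport f → tsupport f ⊆ U →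
      -α₀ * ∫ x in U, (f x) ^ 2 ≤
        dirichletForm d U a b dd c f f + dirichletForm d U a b dd c u (fun x => (f x) ^ 2) := by
  intro f hf hfs hfsub
  set ψ : (Fin d → ℝ) → ℝ := fun x => f x ^ 2 with hψdef
  have hψ : ContDiff ℝ (⊤ : ℕ∞) ψ := hf.pow 2
  have hψs : HasCompactSupport ψ := hfs.mono (fun x hx => by
    simp only [Function.mem_support] at hx ⊢
    exact fun h0 => hx (by simp [hψdef, h0]))
  have hψsub : tsupport ψ ⊆ U :=
    (closure_minimal (fun x hx => subset_closure (by
      simp only [Function.mem_support] at hx ⊢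
      exact fun h0 => hx (by simp [hψdef, h0]))) isClosed_closure).trans hfsub
  have hcf : Continuous f := hf.continuous
  have hcu : Continuous u := hu.continuous
  have hcψ : Continuous ψ := hψ.continuous
  -- generic integrability helper
  have key : ∀ (g1 g2 h : (Fin d → ℝ) → ℝ), Continuous g1 → Continuous g2 →
      HasCompactSupport g1 → tsupport g1 ⊆ U → LocallyIntegrableOn h U →
      IntegrableOn (fun x => g1 x * g2 x * h x) U := by
    intro g1 g2 h c1 c2 s1 su1 lh
    exact integ_mul (c1.mul c2) s1.mul_right (tsupport_mul_subset_left.trans su1) lh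
  have hFfc : ∀ i, Continuous (partialDeriv' d f i) := pd_cont hf
  have hFfs : ∀ i, HasCompactSupport (partialDeriv' d f i) := pd_supp hfs
  have hFfsub : ∀ i, tsupport (partialDeriv' d f i) ⊆ U := fun i => (pd_tsupp i).trans hfsub
  have hFuc : ∀ i, Continuous (partialDeriv' d u i) := pd_cont hu
  have hFus : ∀ i, HasCompactSupport (partialDeriv' d u i) := pd_supp hu_supp
  have hFusub : ∀ i, tsupport (partialDeriv' d u i) ⊆ U := fun i => (pd_tsupp i).trans hu_sub
  have hFψc : ∀ i, Continuous (partialDeriv' d ψ i) := pd_cont hψ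
  -- integrability of each integrand
  have iq : ∀ i j, IntegrableOn
      (fun x => partialDeriv' d f i x * partialDeriv' d f j x * a i j x) U :=
    fun i j => key _ _ _ (hFfc i) (hFfc j) (hFfs i) (hFfsub i) (ha_loc i j)
  have ig2 : ∀ i, IntegrableOn (fun x => f x * partialDeriv' d f i x * dd i x) U :=
    fun i => key _ _ _ hcf (hFfc i) hfs hfsub (hd_loc i)
  have ig3 : ∀ i, IntegrableOn (fun x => partialDeriv' d f i x * f x * b i x) U :=
    fun i => key _ _ _ (hFfc i) hcf (hFfs i) (hFfsub i) (hb_loc i)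
  have ig4 : IntegrableOn (fun x => f x * f x * c x) U :=
    key _ _ _ hcf hcf hfs hfsub hc_loc
  have ig5 : ∀ i j, IntegrableOn
      (fun x => partialDeriv' d u i x * partialDeriv' d ψ j x * a i j x) U :=
    fun i j => key _ _ _ (hFuc i) (hFψc j) (hFus i) (hFusub i) (ha_loc i j)
  have ig6 : ∀ i, IntegrableOn (fun x => u x * partialDeriv' d ψ i x * dd i x) U :=
    fun i => key _ _ _ hcu (hFψc i) hu_supp hu_sub (hd_loc i)
  have ig7 : ∀ i, IntegrableOn (fun x => partialDeriv' d u i x * ψ x * b i x) U :=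
    fun i => key _ _ _ (hFuc i) hcψ (hFus i) (hFusub i) (hb_loc i)
  have ig8 : IntegrableOn (fun x => u x * ψ x * c x) U :=
    key _ _ _ hcu hcψ hu_supp hu_sub hc_loc
  have if2 : IntegrableOn (fun x => f x ^ 2) U :=
    (hcψ.integrable_of_hasCompactSupport hψs).integrableOn
  -- the combined lower-order integrand G
  set G : (Fin d → ℝ) → ℝ := fun x =>
    (∑ i, f x * partialDeriv' d f i x * dd i x) +
    (∑ i, partialDeriv' d f i x * f x * b i x) + f x * f x * c x +
    (∑ i, ∑ j, partialDeriv' d u i x * partialDeriv' d ψ j x * a i j x) +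
    (∑ i, u x * partialDeriv' d ψ i x * dd i x) +
    (∑ i, partialDeriv' d u i x * ψ x * b i x) + u x * ψ x * c x with hGdef
  have iG : IntegrableOn G U := by
    refine ((((((integrable_finset_sum _ fun i _ => ig2 i).add
      (integrable_finset_sum _ fun i _ => ig3 i)).add ig4).add
        (integrable_finset_sum _ fun i _ => integrable_finset_sum _ fun j _ => ig5 i j)).add
          (integrable_finset_sum _ fun i _ => ig6 i)).add
            (integrable_finset_sum _ fun i _ => ig7 i)).add ig8
  -- pointwise identity: the C4 integrand with ψ = f² equals α₀ f² + G
  have hGpt : ∀ x,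
      ((α₀ + c x * (1 + u x) + ∑ i, partialDeriv' d u i x * b i x) * ψ x
        + ∑ i, ((dd i x + b i x) / 2 + u x * dd i x
            + ∑ j, partialDeriv' d u j x * a j i x) * partialDeriv' d ψ i x)
      = α₀ * f x ^ 2 + G x := by
    intro x
    have hG2 : ∀ i, partialDeriv' d ψ i x = 2 * f x * partialDeriv' d f i x :=
      fun i => pd_sq hf i x
    have hswap : ∑ i, ∑ j, partialDeriv' d u j x * a j i x * partialDeriv' d ψ i x
        = ∑ i, ∑ j, partialDeriv' d u i x * partialDeriv' d ψ j x * a i j x := by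
      rw [Finset.sum_comm]
      exact Finset.sum_congr rfl fun i _ => Finset.sum_congr rfl fun j _ => by ring
    have expand : ∀ i, ((dd i x + b i x) / 2 + u x * dd i x
          + ∑ j, partialDeriv' d u j x * a j i x) * partialDeriv' d ψ i x
        = (f x * partialDeriv' d f i x * dd i x
            + partialDeriv' d f i x * f x * b i x
            + u x * partialDeriv' d ψ i x * dd i x)
          + ∑ j, partialDeriv' d u j x * a j i x * partialDeriv' d ψ i x := by
      intro i
      rw [add_mul, Finset.sum_mul, hG2 i]
      ring
    simp only [expand, Finset.sum_add_distrib, hswap, hGdef]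
    simp only [hψdef]
    rw [add_mul, add_mul, Finset.sum_mul]
    have hsum2 : ∑ i, partialDeriv' d u i x * b i x * f x ^ 2
        = ∑ i, partialDeriv' d u i x * f x ^ 2 * b i x :=
      Finset.sum_congr rfl fun i _ => by ring
    rw [hsum2]
    ring
  -- 0 ≤ α₀ ∫ f² + ∫ G  from (C4)
  have hbig := hC4 ψ hψ hψs hψsub (fun x => sq_nonneg _)
  have hbig2 : (0:ℝ) ≤ α₀ * (∫ x in U, f x ^ 2) + ∫ x in U, G x := by
    have e1 : (∫ x in U,
        ((α₀ + c x * (1 + u x) + ∑ i, partialDeriv' d u i x * b i x) * ψ x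
          + ∑ i, ((dd i x + b i x) / 2 + u x * dd i x
              + ∑ j, partialDeriv' d u j x * a j i x) * partialDeriv' d ψ i x))
        = ∫ x in U, (α₀ * f x ^ 2 + G x) :=
      integral_congr_ae (Filter.Eventually.of_forall fun x => hGpt x)
    have e2 : (∫ x in U, (α₀ * f x ^ 2 + G x))
        = α₀ * (∫ x in U, f x ^ 2) + ∫ x in U, G x := by
      rw [integral_add (if2.const_mul α₀) iG, integral_const_mul]
    calc (0:ℝ) ≤ _ := hbig
      _ = _ := by rw [e1, e2]
  -- quadratic part is nonnegative
  have hquad : (0:ℝ) ≤ ∑ i, ∑ j, ∫ x in U,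
      partialDeriv' d f i x * partialDeriv' d f j x * a i j x := by
    have hs : ∑ i, ∑ j, (∫ x in U,
          partialDeriv' d f i x * partialDeriv' d f j x * a i j x)
        = ∫ x in U, ∑ i, ∑ j,
          partialDeriv' d f i x * partialDeriv' d f j x * a i j x := by
      rw [integral_finset_sum _ (fun i _ =>
        integrable_finset_sum _ fun j _ => iq i j)]
      exact Finset.sum_congr rfl fun i _ =>
        (integral_finset_sum _ fun j _ => iq i j).symm
    rw [hs]
    refine integral_nonneg_of_ae ?_
    filter_upwards [ae_restrict_mem hU.measurableSet, ae_restrict_of_ae hC1] with x hxU hx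
    have h1 := hx hxU (fun i => partialDeriv' d f i x)
    rw [sym_quad (fun i j => a i j x) (fun i => partialDeriv' d f i x)] at h1
    refine le_trans ?_ h1
    positivity
  -- the lower-order terms of the two Dirichlet forms sum to ∫ G
  have hdecomp :
      ((∑ i, ∫ x in U, f x * partialDeriv' d f i x * dd i x) +
       (∑ i, ∫ x in U, partialDeriv' d f i x * f x * b i x) +
       (∫ x in U, f x * f x * c x)) +
      ((∑ i, ∑ j, ∫ x in U, partialDeriv' d u i x * partialDeriv' d ψ j x * a i j x) +
       (∑ i, ∫ x in U, u x * partialDeriv' d ψ i x * dd i x) +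
       (∑ i, ∫ x in U, partialDeriv' d u i x * ψ x * b i x) +
       (∫ x in U, u x * ψ x * c x)) = ∫ x in U, G x := by
    have e2 : (∑ i, ∫ x in U, f x * partialDeriv' d f i x * dd i x)
        = ∫ x in U, ∑ i, f x * partialDeriv' d f i x * dd i x :=
      (integral_finset_sum _ fun i _ => ig2 i).symm
    have e3 : (∑ i, ∫ x in U, partialDeriv' d f i x * f x * b i x)
        = ∫ x in U, ∑ i, partialDeriv' d f i x * f x * b i x :=
      (integral_finset_sum _ fun i _ => ig3 i).symm
    have e5 : (∑ i, ∑ j, ∫ x in U,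
          partialDeriv' d u i x * partialDeriv' d ψ j x * a i j x)
        = ∫ x in U, ∑ i, ∑ j,
          partialDeriv' d u i x * partialDeriv' d ψ j x * a i j x := by
      rw [integral_finset_sum _ (fun i _ =>
        integrable_finset_sum _ fun j _ => ig5 i j)]
      exact Finset.sum_congr rfl fun i _ =>
        (integral_finset_sum _ fun j _ => ig5 i j).symm
    have e6 : (∑ i, ∫ x in U, u x * partialDeriv' d ψ i x * dd i x)
        = ∫ x in U, ∑ i, u x * partialDeriv' d ψ i x * dd i x :=
      (integral_finset_sum _ fun i _ => ig6 i).symm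
    have e7 : (∑ i, ∫ x in U, partialDeriv' d u i x * ψ x * b i x)
        = ∫ x in U, ∑ i, partialDeriv' d u i x * ψ x * b i x :=
      (integral_finset_sum _ fun i _ => ig7 i).symm
    have i2 : IntegrableOn (fun x => ∑ i, f x * partialDeriv' d f i x * dd i x) U :=
      integrable_finset_sum _ fun i _ => ig2 i
    have i3 : IntegrableOn (fun x => ∑ i, partialDeriv' d f i x * f x * b i x) U :=
      integrable_finset_sum _ fun i _ => ig3 i
    have i5 : IntegrableOn (fun x => ∑ i, ∑ j,
        partialDeriv' d u i x * partialDeriv' d ψ j x * a i j x) U :=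
      integrable_finset_sum _ fun i _ => integrable_finset_sum _ fun j _ => ig5 i j
    have i6 : IntegrableOn (fun x => ∑ i, u x * partialDeriv' d ψ i x * dd i x) U :=
      integrable_finset_sum _ fun i _ => ig6 i
    have i7 : IntegrableOn (fun x => ∑ i, partialDeriv' d u i x * ψ x * b i x) U :=
      integrable_finset_sum _ fun i _ => ig7 i
    have p23 : IntegrableOn (fun x =>
        (∑ i, f x * partialDeriv' d f i x * dd i x) +
        ∑ i, partialDeriv' d f i x * f x * b i x) U := i2.add i3
    have p234 : IntegrableOn (fun x =>
        (∑ i, f x * partialDeriv' d f i x * dd i x) +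
        (∑ i, partialDeriv' d f i x * f x * b i x) + f x * f x * c x) U := p23.add ig4
    have p2345 : IntegrableOn (fun x =>
        (∑ i, f x * partialDeriv' d f i x * dd i x) +
        (∑ i, partialDeriv' d f i x * f x * b i x) + f x * f x * c x +
        ∑ i, ∑ j, partialDeriv' d u i x * partialDeriv' d ψ j x * a i j x) U := p234.add i5
    have p23456 : IntegrableOn (fun x =>
        (∑ i, f x * partialDeriv' d f i x * dd i x) +
        (∑ i, partialDeriv' d f i x * f x * b i x) + f x * f x * c x +
        (∑ i, ∑ j, partialDeriv' d u i x * partialDeriv' d ψ j x * a i j x) +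
        ∑ i, u x * partialDeriv' d ψ i x * dd i x) U := p2345.add i6
    have p234567 : IntegrableOn (fun x =>
        (∑ i, f x * partialDeriv' d f i x * dd i x) +
        (∑ i, partialDeriv' d f i x * f x * b i x) + f x * f x * c x +
        (∑ i, ∑ j, partialDeriv' d u i x * partialDeriv' d ψ j x * a i j x) +
        (∑ i, u x * partialDeriv' d ψ i x * dd i x) +
        ∑ i, partialDeriv' d u i x * ψ x * b i x) U := p23456.add i7
    have hsplit : ∫ x in U, G x =
        (∫ x in U, ∑ i, f x * partialDeriv' d f i x * dd i x) +
        (∫ x in U, ∑ i, partialDeriv' d f i x * f x * b i x) +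
        (∫ x in U, f x * f x * c x) +
        (∫ x in U, ∑ i, ∑ j, partialDeriv' d u i x * partialDeriv' d ψ j x * a i j x) +
        (∫ x in U, ∑ i, u x * partialDeriv' d ψ i x * dd i x) +
        (∫ x in U, ∑ i, partialDeriv' d u i x * ψ x * b i x) +
        ∫ x in U, u x * ψ x * c x := by
      simp only [hGdef]
      rw [integral_add p234567 ig8, integral_add p23456 i7, integral_add p2345 i6,
        integral_add p234 i5, integral_add p23 ig4, integral_add i2 i3]
    rw [e2, e3, e5, e6, e7, hsplit]
    ring
  simp only [dirichletForm]
  linarith [hquad, hbig2, hdecomp]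
end
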